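/- arXiv:math-ph/0512080 — 2 statements merged into one kernel-verified Lean document; each statement's English description precedes it below -/
import Mathlib

section
/- Beurling–Ahlfors extension theorem: Let h : ℝ → ℝ be a k-quasisymmetric increasing homeomorphism of ℝ onto ℝ. Then there exist a constant c < 1 and a homeomorphism F of the closed upper half-plane {z ∈ ℂ : Im z ≥ 0} onto itself such that F(x) = h(x) for all x ∈ ℝ, F maps the open upper half-plane {z : Im z > 0} onto itself, and F is real-differentiable at every point z with Im z > 0 with |∂̄F(z)| ≤ c · |∂F(z)|. -/
open Complex Metric Set Filter MeasureTheory

/-- Wirtinger derivative ∂f(z) = (Df(z)(1) − i·Df(z)(i))/2, using the real Fréchet derivative. -/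
noncomputable def wD (f : ℂ → ℂ) (z : ℂ) : ℂ :=
  (fderiv ℝ f z 1 - Complex.I * fderiv ℝ f z Complex.I) / 2

/-- Wirtinger derivative ∂̄f(z) = (Df(z)(1) + i·Df(z)(i))/2, using the real Fréchet derivative. -/
noncomputable def wDbar (f : ℂ → ℂ) (z : ℂ) : ℂ :=
  (fderiv ℝ f z 1 + Complex.I * fderiv ℝ f z Complex.I) / 2

/-- `f` restricts to a homeomorphism of `U` onto `V`. -/
def IsHomeoOn (f : ℂ → ℂ) (U V : Set ℂ) : Prop :=
  ∃ g : ℂ → ℂ, Set.MapsTo f U V ∧ Set.MapsTo g V U ∧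
    ContinuousOn f U ∧ ContinuousOn g V ∧
    (∀ z ∈ U, g (f z) = z) ∧ (∀ w ∈ V, f (g w) = w)

/-- sup_{|w−z|=r} |f(w) − f(z)| -/
noncomputable def sphereSup (f : ℂ → ℂ) (z : ℂ) (r : ℝ) : ℝ :=
  sSup ((fun w => ‖f w - f z‖) '' Metric.sphere z r)

/-- inf_{|w−z|=r} |f(w) − f(z)| -/
noncomputable def sphereInf (f : ℂ → ℂ) (z : ℂ) (r : ℝ) : ℝ :=
  sInf ((fun w => ‖f w - f z‖) '' Metric.sphere z r)

/-- `f` is metrically quasiconformal on `U`: there is a finite `H` bounding, at every point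
of `U`, the limsup as `r → 0⁺` of the circular distortion ratio. -/
def MetricallyQC (f : ℂ → ℂ) (U : Set ℂ) : Prop :=
  ∃ H : ℝ, ∀ z ∈ U,
    Filter.limsup (fun r : ℝ => sphereSup f z r / sphereInf f z r)
      (nhdsWithin 0 (Set.Ioi 0)) ≤ H

/-- `h : ℝ → ℝ` is `k`-quasisymmetric. -/
def QuasiSym (h : ℝ → ℝ) (k : ℝ) : Prop :=
  ∀ x : ℝ, ∀ y : ℝ, 0 < y →
    1 / k ≤ (h (x + y) - h x) / (h x - h (x - y)) ∧
      (h (x + y) - h x) / (h x - h (x - y)) ≤ k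

/-!
For `y > 0` let `α` and `β` be the averages of `h` over `[x, x + y]` and `[x + y, x + 2y]` and put
`F (x + iy) = α + i (β - α)`. Averages of an increasing function move strictly with their
interval, which makes `F` injective with `Im F > 0`; the intermediate value theorem, first in `x`
and then in `y`, makes it onto. As `y → 0` both windows shrink to `x`, so `F` extends `h`
continuously, and preimages of bounded sets are bounded, so the inverse is continuous too.
The partial derivatives of `F` involve only the values of `h` at the window endpoints and the two
averages; quasisymmetry keeps each average at least the fraction `1 / (2(k+1))` of the increment
of `h` away from both endpoint values, which bounds `|∂̄F| / |∂F|` by `1 - 1 / (9k(k+1))`.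
-/

open Topology

theorem sub_mul_interval_average (h : ℝ → ℝ) {a b : ℝ} (hab : a ≠ b) :
    (b - a) * ⨍ x in a..b, h x = ∫ x in a..b, h x := by
  rw [interval_average_eq_div, mul_div_cancel₀ _ (sub_ne_zero.2 hab.symm)]

namespace Monotone

variable {h : ℝ → ℝ} {a b : ℝ}

theorem mul_le_intervalIntegral (hmono : Monotone h) (hab : a ≤ b) :
    (b - a) * h a ≤ ∫ x in a..b, h x := by
  calc (b - a) * h a = ∫ _ in a..b, h a := by simp [mul_comm]
    _ ≤ ∫ x in a..b, h x := intervalIntegral.integral_mono_on hab intervalIntegrable_const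
        hmono.intervalIntegrable fun x hx => hmono hx.1

theorem intervalIntegral_le_mul (hmono : Monotone h) (hab : a ≤ b) :
    ∫ x in a..b, h x ≤ (b - a) * h b := by
  calc ∫ x in a..b, h x ≤ ∫ _ in a..b, h b :=
        intervalIntegral.integral_mono_on hab hmono.intervalIntegrable intervalIntegrable_const
          fun x hx => hmono hx.2
    _ = (b - a) * h b := by simp [mul_comm]

theorem intervalAverage_le (hmono : Monotone h) (hab : a < b) :
    ⨍ x in a..b, h x ≤ (h ((a + b) / 2) + h b) / 2 := by
  rw [interval_average_eq_div, div_le_iff₀ (sub_pos.2 hab),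
    ← intervalIntegral.integral_add_adjacent_intervals hmono.intervalIntegrable
      hmono.intervalIntegrable (b := (a + b) / 2)]
  nlinarith [hmono.intervalIntegral_le_mul (a := a) (b := (a + b) / 2) (by linarith),
    hmono.intervalIntegral_le_mul (a := (a + b) / 2) (b := b) (by linarith)]

theorem le_intervalAverage (hmono : Monotone h) (hab : a < b) :
    (h a + h ((a + b) / 2)) / 2 ≤ ⨍ x in a..b, h x := by
  rw [interval_average_eq_div, le_div_iff₀ (sub_pos.2 hab),
    ← intervalIntegral.integral_add_adjacent_intervals hmono.intervalIntegrable
      hmono.intervalIntegrable (b := (a + b) / 2)]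
  nlinarith [hmono.mul_le_intervalIntegral (a := a) (b := (a + b) / 2) (by linarith),
    hmono.mul_le_intervalIntegral (a := (a + b) / 2) (b := b) (by linarith)]

theorem sub_mul_intervalAverage_eq_add (hmono : Monotone h) {c : ℝ} (hac : a < c) (hcb : c < b) :
    (b - a) * ⨍ x in a..b, h x
      = (c - a) * (⨍ x in a..c, h x) + (b - c) * ⨍ x in c..b, h x := by
  rw [sub_mul_interval_average h (hac.trans hcb).ne, sub_mul_interval_average h hac.ne,
    sub_mul_interval_average h hcb.ne, intervalIntegral.integral_add_adjacent_intervals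
      hmono.intervalIntegrable hmono.intervalIntegrable]

end Monotone

namespace StrictMono

variable {h : ℝ → ℝ} {a b a' b' : ℝ}

theorem lt_intervalAverage (hmono : StrictMono h) (hab : a < b) : h a < ⨍ x in a..b, h x := by
  have := hmono.monotone.le_intervalAverage hab
  have : h a < h ((a + b) / 2) := hmono (by linarith)
  linarith

theorem intervalAverage_lt (hmono : StrictMono h) (hab : a < b) : ⨍ x in a..b, h x < h b := by
  have := hmono.monotone.intervalAverage_le hab
  have : h ((a + b) / 2) < h b := hmono (by linarith)
  linarith

theorem intervalAverage_lt_of_lt_left (hmono : StrictMono h) (haa' : a < a') (ha'b : a' < b) :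
    ⨍ x in a..b, h x < ⨍ x in a'..b, h x := by
  have hsplit := hmono.monotone.sub_mul_intervalAverage_eq_add haa' ha'b
  have := hmono.intervalAverage_lt haa'
  have := hmono.lt_intervalAverage ha'b
  nlinarith [sub_pos.2 haa', sub_pos.2 ha'b]

theorem intervalAverage_lt_of_lt_right (hmono : StrictMono h) (hab : a < b) (hbb' : b < b') :
    ⨍ x in a..b, h x < ⨍ x in a..b', h x := by
  have hsplit := hmono.monotone.sub_mul_intervalAverage_eq_add hab hbb'
  have := hmono.intervalAverage_lt hab
  have := hmono.lt_intervalAverage hbb'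
  nlinarith [sub_pos.2 hab, sub_pos.2 hbb']

theorem intervalAverage_lt_intervalAverage (hmono : StrictMono h) (haa' : a ≤ a') (hbb' : b ≤ b')
    (hab : a < b) (ha'b' : a' < b') (hne : a < a' ∨ b < b') :
    ⨍ x in a..b, h x < ⨍ x in a'..b', h x := by
  rcases le_or_gt b a' with hba' | ha'b
  · calc ⨍ x in a..b, h x < h b := hmono.intervalAverage_lt hab
      _ ≤ h a' := hmono.monotone hba'
      _ < ⨍ x in a'..b', h x := hmono.lt_intervalAverage ha'b'
  rcases haa'.eq_or_lt with rfl | haa'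
  · exact hmono.intervalAverage_lt_of_lt_right hab (hne.resolve_left (lt_irrefl a))
  calc ⨍ x in a..b, h x < ⨍ x in a'..b, h x := hmono.intervalAverage_lt_of_lt_left haa' ha'b
    _ ≤ ⨍ x in a'..b', h x := by
      rcases hbb'.eq_or_lt with rfl | hbb'
      · rfl
      · exact (hmono.intervalAverage_lt_of_lt_right ha'b hbb').le

theorem strictMono_intervalAverage_add (hmono : StrictMono h) {y : ℝ} (hy : 0 < y) :
    StrictMono fun x => ⨍ t in x..x + y, h t := fun x x' hxx' =>
  hmono.intervalAverage_lt_intervalAverage hxx'.le (by linarith) (by linarith) (by linarith)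
    (Or.inl hxx')

theorem eq_of_intervalAverage_eq (hmono : StrictMono h) {x y x' y' : ℝ}
    (hy : 0 < y) (hyy' : y ≤ y')
    (h₁ : ⨍ t in x..x + y, h t = ⨍ t in x'..x' + y', h t)
    (h₂ : ⨍ t in x + y..x + 2 * y, h t = ⨍ t in x' + y'..x' + 2 * y', h t) :
    x = x' ∧ y = y' := by
  rcases hyy'.eq_or_lt with rfl | hlt
  · exact ⟨(hmono.strictMono_intervalAverage_add hy).injective h₁, rfl⟩
  -- For `y < y'`, equal first averages force `x' < x` and `x + y < x' + y'`, which moves the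
  -- second window of `(x', y')` strictly to the right of that of `(x, y)`.
  exfalso
  have hx'x : x' < x := by
    by_contra! hxx'
    exact h₁.not_lt (hmono.intervalAverage_lt_intervalAverage hxx' (by linarith) (by linarith)
      (by linarith) (Or.inr (by linarith)))
  have hmid : x + y < x' + y' := by
    by_contra! hmid
    exact h₁.not_gt (hmono.intervalAverage_lt_intervalAverage hx'x.le hmid (by linarith)
      (by linarith) (Or.inl hx'x))
  exact h₂.not_lt (hmono.intervalAverage_lt_intervalAverage hmid.le (by linarith) (by linarith)
    (by linarith) (Or.inl hmid))

end StrictMono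

theorem ContinuousOn.intervalAverage {α : Type*} [TopologicalSpace α] {h : ℝ → ℝ}
    (hc : Continuous h) {a b : α → ℝ} {S : Set α} (ha : ContinuousOn a S)
    (hb : ContinuousOn b S) (hab : ∀ y ∈ S, a y ≠ b y) :
    ContinuousOn (fun y => ⨍ t in a y..b y, h t) S := by
  have hΦ := intervalIntegral.continuous_primitive (μ := volume)
    (fun _ _ => hc.intervalIntegrable _ _) 0
  simp_rw [interval_average_eq_div, ← intervalIntegral.integral_interval_sub_left
    (hc.intervalIntegrable 0 (b _)) (hc.intervalIntegrable 0 (a _))]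
  exact ((hΦ.comp_continuousOn hb).sub (hΦ.comp_continuousOn ha)).div (hb.sub ha)
    fun y hy => sub_ne_zero.2 (hab y hy).symm

theorem continuousOn_of_strictMono_of_eq_const {φ : ℝ → ℝ → ℝ} {s : Set ℝ} {X : ℝ → ℝ} {c : ℝ}
    (hs : IsOpen s) (hφ : ∀ x, ContinuousOn (φ x) s) (hmono : ∀ y ∈ s, StrictMono (φ · y))
    (hX : ∀ y ∈ s, φ (X y) y = c) : ContinuousOn X s := by
  intro y₀ hy₀
  refine ContinuousAt.continuousWithinAt (tendsto_order.2 ⟨fun a ha => ?_, fun b hb => ?_⟩)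
  · have hlt : φ a y₀ < c := hX y₀ hy₀ ▸ hmono y₀ hy₀ ha
    filter_upwards [((hφ a).continuousAt (hs.mem_nhds hy₀)).eventually_lt_const hlt,
      hs.mem_nhds hy₀] with y hy hys
    exact (hmono y hys).lt_iff_lt.1 (hX y hys ▸ hy)
  · have hlt : c < φ b y₀ := hX y₀ hy₀ ▸ hmono y₀ hy₀ hb
    filter_upwards [((hφ b).continuousAt (hs.mem_nhds hy₀)).eventually_const_lt hlt,
      hs.mem_nhds hy₀] with y hy hys
    exact (hmono y hys).lt_iff_lt.1 (hX y hys ▸ hy)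

section
variable {X Y : Type*} [TopologicalSpace X] [TopologicalSpace Y] [T2Space Y] {f : X → Y}
  {g : Y → X} {S : Set X}

theorem IsCompact.continuousOn_image_of_leftInvOn (hS : IsCompact S) (hf : ContinuousOn f S)
    (hg : LeftInvOn g f S) : ContinuousOn g (f '' S) := by
  refine continuousOn_iff_isClosed.2 fun t ht => ⟨f '' (S ∩ t),
    ((hS.inter_right ht).image_of_continuousOn (hf.mono inter_subset_left)).isClosed, ?_⟩
  ext w
  constructor
  · rintro ⟨hwt, z, hzS, rfl⟩
    rw [mem_preimage, hg hzS] at hwt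
    exact ⟨mem_image_of_mem f ⟨hzS, hwt⟩, mem_image_of_mem f hzS⟩
  · rintro ⟨⟨z, ⟨hzS, hzt⟩, rfl⟩, -⟩
    exact ⟨by rwa [mem_preimage, hg hzS], mem_image_of_mem f hzS⟩

theorem ContinuousOn.continuousOn_image_of_leftInvOn (hf : ContinuousOn f S)
    (hg : LeftInvOn g f S) (hproper : ∀ w ∈ f '' S, ∃ t ∈ 𝓝 w, IsCompact (S ∩ f ⁻¹' t)) :
    ContinuousOn g (f '' S) := by
  intro w hw
  obtain ⟨t, ht, hK⟩ := hproper w hw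
  have hgK := hK.continuousOn_image_of_leftInvOn (hf.mono inter_subset_left)
    (hg.mono inter_subset_left)
  rw [image_inter_preimage] at hgK
  exact (continuousWithinAt_inter ht).1 (hgK w ⟨hw, mem_of_mem_nhds ht⟩)

end

theorem isHomeoOn_of_bijOn {f : ℂ → ℂ} {U V : Set ℂ} (hf : BijOn f U V)
    (hfc : ContinuousOn f U) (hgc : ContinuousOn (Function.invFunOn f U) V) : IsHomeoOn f U V :=
  ⟨Function.invFunOn f U, hf.mapsTo, hf.surjOn.mapsTo_invFunOn, hfc, hgc,
    fun _ hz => hf.invOn_invFunOn.1 hz, fun _ hw => hf.invOn_invFunOn.2 hw⟩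

namespace QuasiSym

variable {h : ℝ → ℝ} {k a b : ℝ}

theorem midpoint_bounds (hqs : QuasiSym h k) (hmono : StrictMono h) (hab : a < b) :
    h b - h ((a + b) / 2) ≤ k * (h ((a + b) / 2) - h a) ∧
      h ((a + b) / 2) - h a ≤ k * (h b - h ((a + b) / 2)) := by
  obtain ⟨hlow, hup⟩ := hqs ((a + b) / 2) ((b - a) / 2) (by linarith)
  rw [show (a + b) / 2 + (b - a) / 2 = b by ring, show (a + b) / 2 - (b - a) / 2 = a by ring]
    at hlow hup
  have hleft : 0 < h ((a + b) / 2) - h a := sub_pos.2 (hmono (by linarith))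
  have hright : 0 < h b - h ((a + b) / 2) := sub_pos.2 (hmono (by linarith))
  have hk : 0 < k := (div_pos hright hleft).trans_le hup
  rw [div_le_iff₀ hleft] at hup
  rw [div_le_div_iff₀ hk hleft] at hlow
  constructor <;> linarith

theorem one_le (hqs : QuasiSym h k) (hmono : StrictMono h) : 1 ≤ k := by
  obtain ⟨hle, hge⟩ := hqs.midpoint_bounds hmono zero_lt_two
  have hleft : 0 < h ((0 + 2) / 2) - h 0 := sub_pos.2 (hmono (by norm_num))
  have hright : 0 < h 2 - h ((0 + 2) / 2) := sub_pos.2 (hmono (by norm_num))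
  nlinarith

theorem intervalAverage_bounds (hqs : QuasiSym h k) (hmono : StrictMono h) (hab : a < b) :
    (h b - h a) / (2 * (k + 1)) ≤ (⨍ x in a..b, h x) - h a ∧
      (h b - h a) / (2 * (k + 1)) ≤ h b - ⨍ x in a..b, h x := by
  obtain ⟨hle, hge⟩ := hqs.midpoint_bounds hmono hab
  have hk := hqs.one_le hmono
  have hlower := hmono.monotone.le_intervalAverage hab
  have hupper := hmono.monotone.intervalAverage_le hab
  constructor <;> rw [div_le_iff₀ (by linarith)] <;> nlinarith

end QuasiSym

/-- With `a`, `b` the increments of `h` over the two windows and `p`, `q` the distances of the two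
averages from `h (x + y)`, the two sides are `4 y² |∂̄F|²` and `c² · 4 y² |∂F|²`. -/
theorem dilatation_bound {k a b p q : ℝ} (hk : 1 ≤ k) (ha : 0 < a) (hb : 0 < b)
    (hab : a ≤ k * b) (hba : b ≤ k * a)
    (hp : a / (2 * (k + 1)) ≤ p) (hp' : a / (2 * (k + 1)) ≤ a - p)
    (hq : b / (2 * (k + 1)) ≤ q) (hq' : b / (2 * (k + 1)) ≤ b - q) :
    (a - 2 * b + p + q) ^ 2 + (b - a + p) ^ 2
      ≤ (1 - 1 / (9 * k * (k + 1))) ^ 2 * ((a + 2 * b - p - q) ^ 2 + (b - a - p) ^ 2) := by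
  set D := (a + 2 * b - p - q) ^ 2 + (b - a - p) ^ 2
  set δ := 1 / (9 * k * (k + 1))
  have hk1 : 0 < k + 1 := by linarith
  have hp0 : 0 ≤ p := le_trans (by positivity) hp
  have hq0 : 0 ≤ q := le_trans (by positivity) hq
  have hpa : p ≤ a := by linarith [show 0 ≤ a / (2 * (k + 1)) by positivity]
  have hqb : q ≤ b := by linarith [show 0 ≤ b / (2 * (k + 1)) by positivity]
  have hD : D ≤ 18 * k * (a * b) := by
    have : D ≤ (a + 2 * b) ^ 2 + (2 * a + b) ^ 2 := by nlinarith
    nlinarith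
  have hgap : 4 * (a * b) / (k + 1) ≤ 4 * (a * (b - q) + b * (a - p)) := by
    have e : 4 * (a * b) / (k + 1) = 4 * (a * (b / (2 * (k + 1))) + b * (a / (2 * (k + 1)))) := by
      field_simp; ring
    rw [e]
    gcongr
  have hδD : 2 * δ * D ≤ 4 * (a * b) / (k + 1) := by
    calc 2 * δ * D ≤ 2 * δ * (18 * k * (a * b)) := by gcongr
      _ = 4 * (a * b) / (k + 1) := by simp only [δ]; field_simp; ring
  calc (a - 2 * b + p + q) ^ 2 + (b - a + p) ^ 2 = D - 4 * (a * (b - q) + b * (a - p)) := by ring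
    _ ≤ D - 2 * δ * D := by linarith
    _ = (1 - 2 * δ) * D := by ring
    _ ≤ (1 - δ) ^ 2 * D := by gcongr; nlinarith [sq_nonneg δ]

theorem norm_wDbar_le_of_hasFDerivAt {F : ℂ → ℂ} {L : ℂ →L[ℝ] ℂ} {z : ℂ} {c ux vx uy vy : ℝ}
    (hF : HasFDerivAt F L z) (hc : 0 ≤ c) (hx : L 1 = ux + vx * I) (hy : L I = uy + vy * I)
    (hL : (ux - vy) ^ 2 + (vx + uy) ^ 2 ≤ c ^ 2 * ((ux + vy) ^ 2 + (vx - uy) ^ 2)) :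
    ‖wDbar F z‖ ≤ c * ‖wD F z‖ := by
  rw [← pow_le_pow_iff_left₀ (norm_nonneg _) (by positivity) two_ne_zero, mul_pow,
    wDbar, wD, hF.fderiv, hx, hy, Complex.sq_norm, Complex.sq_norm, Complex.normSq_apply,
    Complex.normSq_apply]
  simp only [div_ofNat_re, div_ofNat_im, add_re, add_im, sub_re, sub_im, mul_re, mul_im, ofReal_re,
    ofReal_im, I_re, I_im]
  nlinarith

noncomputable def windowAverage (h : ℝ → ℝ) (s : ℝ) (z : ℂ) : ℝ :=
  ⨍ t in z.re + s * z.im..z.re + (s + 1) * z.im, h t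

theorem hasFDerivAt_windowAverage {h : ℝ → ℝ} (hc : Continuous h) (s : ℝ) {z : ℂ}
    (hz : z.im ≠ 0) :
    HasFDerivAt (windowAverage h s)
      (((h (z.re + (s + 1) * z.im) - h (z.re + s * z.im)) / z.im) • reCLM +
        (((s + 1) * h (z.re + (s + 1) * z.im) - s * h (z.re + s * z.im)
          - windowAverage h s z) / z.im) • imCLM) z := by
  set Φ : ℝ → ℝ := fun t => ∫ x in (0 : ℝ)..t, h x
  have hwindow : windowAverage h s =
      fun w => (Φ (w.re + (s + 1) * w.im) - Φ (w.re + s * w.im)) * w.im⁻¹ := by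
    funext w
    rw [windowAverage, interval_average_eq_div, intervalIntegral.integral_interval_sub_left
      (hc.intervalIntegrable _ _) (hc.intervalIntegrable _ _), div_eq_mul_inv]
    ring_nf
  have hΦ (c : ℝ) : HasFDerivAt (fun w : ℂ => Φ (w.re + c * w.im))
      (h (z.re + c * z.im) • (reCLM + c • imCLM)) z :=
    (hc.integral_hasStrictDerivAt 0 _).hasDerivAt.comp_hasFDerivAt z
      (reCLM + c • imCLM).hasFDerivAt
  have hinv : HasFDerivAt (fun w : ℂ => w.im⁻¹) (-(z.im ^ 2)⁻¹ • imCLM) z :=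
    (hasDerivAt_inv hz).comp_hasFDerivAt z imCLM.hasFDerivAt
  rw [hwindow]
  refine (((hΦ (s + 1)).sub (hΦ s)).mul hinv).congr_fderiv ?_
  ext w
  simp only [Pi.sub_apply, smul_add, add_apply, smul_apply, sub_apply, reCLM_apply, imCLM_apply,
    smul_eq_mul, neg_mul, mul_neg]
  field_simp
  ring

theorem windowAverage_zero (h : ℝ → ℝ) (z : ℂ) :
    windowAverage h 0 z = ⨍ t in z.re..z.re + z.im, h t := by
  simp [windowAverage]

theorem windowAverage_one (h : ℝ → ℝ) (z : ℂ) :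
    windowAverage h 1 z = ⨍ t in z.re + z.im..z.re + 2 * z.im, h t := by
  simp [windowAverage, one_add_one_eq_two]

noncomputable def beurlingAhlforsExt (h : ℝ → ℝ) (z : ℂ) : ℂ :=
  if z.im ≤ 0 then h z.re
  else windowAverage h 0 z + I * (windowAverage h 1 z - windowAverage h 0 z)

section
variable {h : ℝ → ℝ} {z : ℂ}

theorem hasFDerivAt_beurlingAhlforsExt (hc : Continuous h) (hz : 0 < z.im) :
    HasFDerivAt (beurlingAhlforsExt h)
      (ofRealCLM.comp (fderiv ℝ (windowAverage h 0) z) +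
        I • (ofRealCLM.comp (fderiv ℝ (windowAverage h 1) z) -
          ofRealCLM.comp (fderiv ℝ (windowAverage h 0) z))) z := by
  have hD (s : ℝ) := ofRealCLM.hasFDerivAt.comp z
    (hasFDerivAt_windowAverage hc s hz.ne').differentiableAt.hasFDerivAt
  refine ((hD 0).add (((hD 1).sub (hD 0)).const_mul I)).congr_of_eventuallyEq ?_
  filter_upwards [continuous_im.isOpen_preimage _ isOpen_Ioi |>.mem_nhds hz] with w hw
  simp [beurlingAhlforsExt, not_le.2 (show 0 < w.im from hw)]

theorem beurlingAhlforsExt_dilatation {k : ℝ} (hc : Continuous h) (hmono : StrictMono h)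
    (hqs : QuasiSym h k) (hz : 0 < z.im) :
    ‖wDbar (beurlingAhlforsExt h) z‖
      ≤ (1 - 1 / (9 * k * (k + 1))) * ‖wD (beurlingAhlforsExt h) z‖ := by
  have hk := hqs.one_le hmono
  have hc₀ : 0 ≤ 1 - 1 / (9 * k * (k + 1)) :=
    sub_nonneg.2 ((div_le_one (by positivity)).2 (by nlinarith))
  have hF := hasFDerivAt_beurlingAhlforsExt hc hz
  simp only [(hasFDerivAt_windowAverage hc _ hz.ne').fderiv, windowAverage_zero,
    windowAverage_one, zero_add, zero_mul, add_zero, sub_zero, one_mul, one_add_one_eq_two] at hF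
  set x := z.re
  set y := z.im
  set a := h (x + y) - h x
  set b := h (x + 2 * y) - h (x + y)
  set p := h (x + y) - ⨍ t in x..x + y, h t
  set q := (⨍ t in x + y..x + 2 * y, h t) - h (x + y)
  refine norm_wDbar_le_of_hasFDerivAt hF hc₀ (ux := a / y) (vx := (b - a) / y) (uy := p / y)
    (vy := (2 * b - p - q) / y) ?_ ?_ ?_
  · simp [Complex.ext_iff, a, b, sub_div]
  · simp [Complex.ext_iff, b, p, q, sub_div, mul_div_assoc]
    ring
  have hxy : x < x + y := by linarith
  have hxy' : x + y < x + 2 * y := by linarith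
  obtain ⟨hab, hba⟩ := hqs.midpoint_bounds hmono (show x < x + 2 * y by linarith)
  rw [show (x + (x + 2 * y)) / 2 = x + y by ring] at hab hba
  obtain ⟨hp, hp'⟩ := hqs.intervalAverage_bounds hmono hxy
  obtain ⟨hq, hq'⟩ := hqs.intervalAverage_bounds hmono hxy'
  have key := dilatation_bound hk (sub_pos.2 (hmono hxy)) (sub_pos.2 (hmono hxy')) hba hab
    (p := p) (q := q) (by linarith) (by linarith) (by linarith) (by linarith)
  refine (Eq.trans_le ?_ (div_le_div_of_nonneg_right key (sq_nonneg y))).trans_eq ?_ <;> ring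

theorem beurlingAhlforsExt_ofReal (x : ℝ) : beurlingAhlforsExt h x = h x := by
  simp [beurlingAhlforsExt]

theorem beurlingAhlforsExt_of_im_eq_zero (hz : z.im = 0) : beurlingAhlforsExt h z = h z.re := by
  simp [beurlingAhlforsExt, hz]

theorem re_beurlingAhlforsExt (hz : 0 < z.im) :
    (beurlingAhlforsExt h z).re = ⨍ t in z.re..z.re + z.im, h t := by
  simp [beurlingAhlforsExt, not_le.2 hz, windowAverage_zero]

theorem im_beurlingAhlforsExt (hz : 0 < z.im) :
    (beurlingAhlforsExt h z).im
      = (⨍ t in z.re + z.im..z.re + 2 * z.im, h t) - ⨍ t in z.re..z.re + z.im, h t := by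
  simp [beurlingAhlforsExt, not_le.2 hz, windowAverage_zero, windowAverage_one]

theorem im_beurlingAhlforsExt_pos (hmono : StrictMono h) (hz : 0 < z.im) :
    0 < (beurlingAhlforsExt h z).im := by
  rw [im_beurlingAhlforsExt hz, sub_pos]
  exact (hmono.intervalAverage_lt (by linarith)).trans (hmono.lt_intervalAverage (by linarith))

theorem im_beurlingAhlforsExt_nonneg (hmono : StrictMono h) (hz : 0 ≤ z.im) :
    0 ≤ (beurlingAhlforsExt h z).im := by
  rcases hz.eq_or_lt with hz | hz
  · simp [beurlingAhlforsExt_of_im_eq_zero hz.symm]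
  · exact (im_beurlingAhlforsExt_pos hmono hz).le

theorem norm_beurlingAhlforsExt_sub_le (hmono : StrictMono h) (hz : 0 ≤ z.im) (x₀ : ℝ) :
    ‖beurlingAhlforsExt h z - h x₀‖
      ≤ 3 * |h z.re - h x₀| + 2 * |h (z.re + 2 * z.im) - h x₀| := by
  rcases hz.eq_or_lt with hz | hz
  · rw [beurlingAhlforsExt_of_im_eq_zero hz.symm, ← ofReal_sub, norm_real, Real.norm_eq_abs]
    have := abs_nonneg (h (z.re + 2 * z.im) - h x₀)
    linarith [abs_nonneg (h z.re - h x₀)]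
  have hx : z.re < z.re + z.im := by linarith
  have hx' : z.re + z.im < z.re + 2 * z.im := by linarith
  have h₁ := hmono.lt_intervalAverage hx
  have h₂ := hmono.intervalAverage_lt hx
  have h₃ := hmono.lt_intervalAverage hx'
  have h₄ := hmono.intervalAverage_lt hx'
  have hre : |(beurlingAhlforsExt h z - h x₀).re|
      ≤ |h z.re - h x₀| + (h (z.re + 2 * z.im) - h z.re) := by
    rw [sub_re, ofReal_re, re_beurlingAhlforsExt hz, abs_le]
    constructor <;> linarith [neg_abs_le (h z.re - h x₀), le_abs_self (h z.re - h x₀)]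
  have him : |(beurlingAhlforsExt h z - h x₀).im| ≤ h (z.re + 2 * z.im) - h z.re := by
    rw [sub_im, ofReal_im, sub_zero, im_beurlingAhlforsExt hz, abs_le]
    constructor <;> linarith
  calc ‖beurlingAhlforsExt h z - h x₀‖
      ≤ |(beurlingAhlforsExt h z - h x₀).re| + |(beurlingAhlforsExt h z - h x₀).im| :=
        norm_le_abs_re_add_abs_im _
    _ ≤ 3 * |h z.re - h x₀| + 2 * |h (z.re + 2 * z.im) - h x₀| := by
        linarith [le_abs_self (h (z.re + 2 * z.im) - h x₀), neg_abs_le (h z.re - h x₀)]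

theorem continuousOn_beurlingAhlforsExt (hc : Continuous h) (hmono : StrictMono h) :
    ContinuousOn (beurlingAhlforsExt h) {z : ℂ | 0 ≤ z.im} := by
  intro z hz
  rcases (show 0 ≤ z.im from hz).eq_or_lt with hz₀ | hz₀
  · rw [ContinuousWithinAt, beurlingAhlforsExt_of_im_eq_zero hz₀.symm,
      tendsto_iff_norm_sub_tendsto_zero]
    refine squeeze_zero' (Eventually.of_forall fun _ => norm_nonneg _)
      (eventually_nhdsWithin_of_forall fun w hw => norm_beurlingAhlforsExt_sub_le hmono hw z.re) ?_
    have hcont : Continuous fun w : ℂ =>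
        3 * |h w.re - h z.re| + 2 * |h (w.re + 2 * w.im) - h z.re| := by
      fun_prop
    simpa [← hz₀] using hcont.continuousWithinAt.tendsto (s := {z : ℂ | 0 ≤ z.im}) (x := z)
  · exact (hasFDerivAt_beurlingAhlforsExt hc hz₀).continuousAt.continuousWithinAt

theorem injOn_beurlingAhlforsExt (hmono : StrictMono h) :
    InjOn (beurlingAhlforsExt h) {z : ℂ | 0 ≤ z.im} := by
  have key {z w : ℂ} (hz : 0 < z.im) (hzw : z.im ≤ w.im)
      (he : beurlingAhlforsExt h z = beurlingAhlforsExt h w) : z = w := by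
    have hw : 0 < w.im := hz.trans_le hzw
    have hre := congrArg re he
    have him := congrArg im he
    rw [re_beurlingAhlforsExt hz, re_beurlingAhlforsExt hw] at hre
    rw [im_beurlingAhlforsExt hz, im_beurlingAhlforsExt hw, hre, sub_left_inj] at him
    obtain ⟨h₁, h₂⟩ := hmono.eq_of_intervalAverage_eq hz hzw hre him
    exact Complex.ext h₁ h₂
  intro z (hz : 0 ≤ z.im) w (hw : 0 ≤ w.im) he
  rcases hz.eq_or_lt with hz | hz <;> rcases hw.eq_or_lt with hw | hw
  · rw [beurlingAhlforsExt_of_im_eq_zero hz.symm, beurlingAhlforsExt_of_im_eq_zero hw.symm,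
      ofReal_inj] at he
    exact Complex.ext (hmono.injective he) (hz.symm.trans hw)
  · have := im_beurlingAhlforsExt_pos hmono hw
    rw [← he, beurlingAhlforsExt_of_im_eq_zero hz.symm, ofReal_im] at this
    exact absurd this (lt_irrefl 0)
  · have := im_beurlingAhlforsExt_pos hmono hz
    rw [he, beurlingAhlforsExt_of_im_eq_zero hw.symm, ofReal_im] at this
    exact absurd this (lt_irrefl 0)
  · rcases le_total z.im w.im with hzw | hwz
    · exact key hz hzw he
    · exact (key hw hwz he.symm).symm

end

namespace OrderIso

variable (e : ℝ ≃o ℝ)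

theorem exists_intervalAverage_add_eq {y : ℝ} (hy : 0 < y) (u : ℝ) :
    ∃ x, ⨍ t in x..x + y, e t = u := by
  have hcont : ContinuousOn (fun x => ⨍ t in x..x + y, e t) univ :=
    .intervalAverage e.continuous continuousOn_id (by fun_prop) fun x _ => by linarith
  have hlow := e.strictMono.intervalAverage_lt (show e.symm u - y < e.symm u by linarith)
  have hhigh := e.strictMono.lt_intervalAverage (show e.symm u < e.symm u + y by linarith)
  rw [e.apply_symm_apply] at hlow hhigh
  obtain ⟨x, -, hx⟩ := intermediate_value_Icc (show e.symm u - y ≤ e.symm u by linarith)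
    (hcont.mono (subset_univ _)) ⟨by simpa using hlow.le, hhigh.le⟩
  exact ⟨x, hx⟩

theorem add_lt_intervalAverage {x y u v : ℝ} (hy : 0 < y) (hu : ⨍ t in x..x + y, e t = u)
    (hY : 2 * (e.symm (u + v) - e.symm (u - v)) ≤ y) :
    u + v < ⨍ t in x + y..x + 2 * y, e t := by
  by_contra! hle
  have hmid := e.monotone.intervalAverage_le (show x < x + y by linarith)
  have hright : e (x + y) < u + v :=
    (e.strictMono.lt_intervalAverage (by linarith)).trans_le hle
  have h₁ : x + y < e.symm (u + v) := e.lt_symm_apply.2 hright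
  have h₂ : e.symm (u - v) < (x + (x + y)) / 2 := e.symm_apply_lt.2 (by linarith)
  linarith

theorem surjOn_beurlingAhlforsExt :
    SurjOn (beurlingAhlforsExt e) {z : ℂ | 0 < z.im} {z : ℂ | 0 < z.im} := by
  intro w (hw : 0 < w.im)
  choose! X hX using fun y (hy : 0 < y) => e.exists_intervalAverage_add_eq hy w.re
  have hXlt (y : ℝ) (hy : 0 < y) : X y < e.symm w.re :=
    e.lt_symm_apply.2 (hX y hy ▸ e.strictMono.lt_intervalAverage (by linarith))
  have hXcont : ContinuousOn X (Ioi 0) :=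
    continuousOn_of_strictMono_of_eq_const isOpen_Ioi
      (fun x => .intervalAverage e.continuous continuousOn_const (by fun_prop)
        fun y (hy : 0 < y) => by linarith)
      (fun y hy => e.strictMono.strictMono_intervalAverage_add hy) hX
  set β : ℝ → ℝ := fun y => ⨍ t in X y + y..X y + 2 * y, e t
  have hβ : ContinuousOn β (Ioi 0) :=
    .intervalAverage e.continuous (by fun_prop) (by fun_prop) fun y (hy : 0 < y) => by linarith
  obtain ⟨y₁, hy₁, hβy₁⟩ : ∃ y > 0, β y < w.re + w.im := by
    have hlim : Tendsto (fun y => e (e.symm w.re + 2 * y)) (𝓝[>] 0) (𝓝 w.re) := by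
      have hcont : Continuous fun y : ℝ => e (e.symm w.re + 2 * y) :=
        e.continuous.comp (by fun_prop)
      simpa using (hcont.tendsto 0).mono_left nhdsWithin_le_nhds
    obtain ⟨y, hlt, hy : 0 < y⟩ := ((hlim.eventually_lt_const (lt_add_of_pos_right _ hw)).and
      self_mem_nhdsWithin).exists
    refine ⟨y, hy, ?_⟩
    calc β y < e (X y + 2 * y) := e.strictMono.intervalAverage_lt (by linarith)
      _ ≤ e (e.symm w.re + 2 * y) := e.monotone (by linarith [hXlt y hy])
      _ < w.re + w.im := hlt
  set y₂ := max y₁ (2 * (e.symm (w.re + w.im) - e.symm (w.re - w.im)))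
  have hy₂ : 0 < y₂ := hy₁.trans_le (le_max_left _ _)
  have hβy₂ : w.re + w.im < β y₂ :=
    e.add_lt_intervalAverage hy₂ (hX y₂ hy₂) (le_max_right _ _)
  obtain ⟨y, hy, hβy⟩ := intermediate_value_Icc (le_max_left y₁ _)
    (hβ.mono fun t ht => hy₁.trans_le ht.1) ⟨hβy₁.le, hβy₂.le⟩
  have hy₀ : 0 < y := hy₁.trans_le hy.1
  refine ⟨X y + y * I, by simpa using hy₀, Complex.ext ?_ ?_⟩
  · simp [re_beurlingAhlforsExt (show 0 < (X y + y * I).im by simpa using hy₀), hX y hy₀]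
  · have hβy' : (⨍ t in X y + y..X y + 2 * y, e t) = w.re + w.im := hβy
    simp [im_beurlingAhlforsExt (show 0 < (X y + y * I).im by simpa using hy₀), hX y hy₀, hβy']

theorem beurlingAhlforsExt_mem_box {R : ℝ} {z : ℂ} (hz : 0 ≤ z.im)
    (hR : ‖beurlingAhlforsExt e z‖ ≤ R) :
    z ∈ Icc (e.symm (-R) - 2 * (e.symm (2 * R) - e.symm (-4 * R))) (e.symm R) ×ℂ
      Icc 0 (2 * (e.symm (2 * R) - e.symm (-4 * R))) := by
  have hR₀ : 0 ≤ R := (norm_nonneg _).trans hR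
  have hY : 0 ≤ e.symm (2 * R) - e.symm (-4 * R) := sub_nonneg.2 (e.symm.monotone (by linarith))
  have hre := (abs_re_le_norm _).trans hR
  have him := (abs_im_le_norm _).trans hR
  rw [abs_le] at hre him
  rcases hz.eq_or_lt with hz₀ | hz₀
  · rw [beurlingAhlforsExt_of_im_eq_zero hz₀.symm, ofReal_re] at hre
    have h₁ : e.symm (-R) ≤ z.re := e.symm_apply_le.2 hre.1
    have h₂ : z.re ≤ e.symm R := e.le_symm_apply.2 hre.2
    exact ⟨⟨by linarith, h₂⟩, ⟨hz₀.le, by linarith⟩⟩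
  rw [re_beurlingAhlforsExt hz₀] at hre
  rw [im_beurlingAhlforsExt hz₀] at him
  have hx : z.re < z.re + z.im := by linarith
  have hx' : z.re + z.im < z.re + 2 * z.im := by linarith
  have hmid := e.monotone.intervalAverage_le hx
  have h₁ := e.strictMono.lt_intervalAverage hx
  have h₂ := e.strictMono.intervalAverage_lt hx
  have h₃ := e.strictMono.lt_intervalAverage hx'
  have hxR : z.re ≤ e.symm R := e.le_symm_apply.2 (by linarith)
  have hxy₁ : z.re + z.im ≤ e.symm (2 * R) := e.le_symm_apply.2 (by linarith)
  have hxy₂ : e.symm (-R) ≤ z.re + z.im := e.symm_apply_le.2 (by linarith)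
  have hmid' : e.symm (-4 * R) ≤ (z.re + (z.re + z.im)) / 2 := e.symm_apply_le.2 (by linarith)
  exact ⟨⟨by linarith, hxR⟩, ⟨hz, by linarith⟩⟩

theorem isCompact_inter_preimage_closedBall (R : ℝ) :
    IsCompact ({z : ℂ | 0 ≤ z.im} ∩ beurlingAhlforsExt e ⁻¹' closedBall 0 R) :=
  (isCompact_Icc.reProdIm isCompact_Icc).of_isClosed_subset
    ((continuousOn_beurlingAhlforsExt e.continuous e.strictMono).preimage_isClosed_of_isClosed
      (isClosed_le continuous_const continuous_im) isClosed_closedBall)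
    fun _ ⟨hz, hR⟩ => e.beurlingAhlforsExt_mem_box hz (mem_closedBall_zero_iff.1 hR)

theorem image_beurlingAhlforsExt_upperHalf :
    beurlingAhlforsExt e '' {z : ℂ | 0 < z.im} = {z : ℂ | 0 < z.im} :=
  Subset.antisymm (image_subset_iff.2 fun _ hz => im_beurlingAhlforsExt_pos e.strictMono hz)
    e.surjOn_beurlingAhlforsExt

theorem bijOn_beurlingAhlforsExt :
    BijOn (beurlingAhlforsExt e) {z : ℂ | 0 ≤ z.im} {z : ℂ | 0 ≤ z.im} := by
  refine ⟨fun _ hz => im_beurlingAhlforsExt_nonneg e.strictMono hz,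
    injOn_beurlingAhlforsExt e.strictMono, fun w (hw : 0 ≤ w.im) => ?_⟩
  rcases hw.eq_or_lt with hw₀ | hw₀
  · refine ⟨e.symm w.re, by simp, ?_⟩
    rw [beurlingAhlforsExt_ofReal, e.apply_symm_apply]
    exact Complex.ext rfl hw₀
  · obtain ⟨z, hz : 0 < z.im, rfl⟩ := e.surjOn_beurlingAhlforsExt hw₀
    exact ⟨z, hz.le, rfl⟩

theorem isHomeoOn_beurlingAhlforsExt :
    IsHomeoOn (beurlingAhlforsExt e) {z : ℂ | 0 ≤ z.im} {z : ℂ | 0 ≤ z.im} := by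
  have hbij := e.bijOn_beurlingAhlforsExt
  have hcont := continuousOn_beurlingAhlforsExt e.continuous e.strictMono
  refine isHomeoOn_of_bijOn hbij hcont ?_
  have hinv := hcont.continuousOn_image_of_leftInvOn hbij.invOn_invFunOn.1 fun w _ =>
    ⟨closedBall 0 (‖w‖ + 1), closedBall_mem_nhds_of_mem (by simp),
      e.isCompact_inter_preimage_closedBall _⟩
  rwa [hbij.image_eq] at hinv

end OrderIso

theorem beurling_ahlfors_extension_general
    (h : ℝ → ℝ) (hmono : StrictMono h) (hsurj : Function.Surjective h)
    (k : ℝ) (hqs : QuasiSym h k) :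
    ∃ c : ℝ, c < 1 ∧ ∃ F : ℂ → ℂ,
      IsHomeoOn F {z : ℂ | 0 ≤ z.im} {z : ℂ | 0 ≤ z.im} ∧
      (∀ x : ℝ, F (x : ℂ) = ((h x : ℝ) : ℂ)) ∧
      F '' {z : ℂ | 0 < z.im} = {z : ℂ | 0 < z.im} ∧
      ∀ z : ℂ, 0 < z.im →
        DifferentiableAt ℝ F z ∧
        ‖wDbar F z‖ ≤ c * ‖wD F z‖ := by
  obtain ⟨e, rfl⟩ : ∃ e : ℝ ≃o ℝ, ⇑e = h := ⟨hmono.orderIsoOfSurjective h hsurj, rfl⟩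
  have hk := hqs.one_le e.strictMono
  refine ⟨1 - 1 / (9 * k * (k + 1)), sub_lt_self 1 (by positivity), beurlingAhlforsExt e,
    e.isHomeoOn_beurlingAhlforsExt, beurlingAhlforsExt_ofReal,
    e.image_beurlingAhlforsExt_upperHalf, fun z hz => ⟨?_, ?_⟩⟩
  · exact (hasFDerivAt_beurlingAhlforsExt e.continuous hz).differentiableAt
  · exact beurlingAhlforsExt_dilatation e.continuous e.strictMono hqs hz

/-- Beurling–Ahlfors extension theorem: a quasisymmetric increasing homeomorphism of ℝ
extends to a quasiconformal homeomorphism of the closed upper half-plane, whose complex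
dilatation is bounded by a constant `c < 1` on the open upper half-plane. -/
theorem beurling_ahlfors_extension
    (h : ℝ → ℝ) (hmono : StrictMono h) (hsurj : Function.Surjective h)
    (k : ℝ) (hk : 1 ≤ k) (hqs : QuasiSym h k) :
    ∃ c : ℝ, c < 1 ∧ ∃ F : ℂ → ℂ,
      IsHomeoOn F {z : ℂ | 0 ≤ z.im} {z : ℂ | 0 ≤ z.im} ∧
      (∀ x : ℝ, F (x : ℂ) = ((h x : ℝ) : ℂ)) ∧
      F '' {z : ℂ | 0 < z.im} = {z : ℂ | 0 < z.im} ∧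
      ∀ z : ℂ, 0 < z.im →
        DifferentiableAt ℝ F z ∧
        ‖wDbar F z‖ ≤ c * ‖wD F z‖ :=
  beurling_ahlfors_extension_general h hmono hsurj k hqs
end

section
/- Quasisymmetric homeomorphisms of the line are closed under composition: if h₁ : ℝ → ℝ is a k₁-quasisymmetric increasing homeomorphism of ℝ onto ℝ and h₂ : ℝ → ℝ is a k₂-quasisymmetric increasing homeomorphism of ℝ onto ℝ, then the composition h₂ ∘ h₁ is quasisymmetric, i.e., there exists k ≥ 1 such that h₂ ∘ h₁ is k-quasisymmetric. -/
open Complex Metric Set Filter MeasureTheory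

/-
A k-quasisymmetric h is doubling in both directions: the increment of h over [x, x + y] is at most
k times its increment over [x - y, x], and vice versa. Iterating, the increment over an interval of
length n·s adjacent to one of length s is at most (k + ⋯ + kⁿ) times the increment over the latter.
Now h₁ maps x - y < x < x + y to a < b < c with c - b ≤ ⌈k₁⌉(b - a), so h₂ increases over [b, c]
by at most (k₂ + ⋯ + k₂^⌈k₁⌉) times its increase over [a, b]. The reverse bound is the same
argument applied to the reflections x ↦ -h(-x).
-/

def QuasiSymUpper (h : ℝ → ℝ) (k : ℝ) : Prop :=
  ∀ x y : ℝ, 0 < y → h (x + y) - h x ≤ k * (h x - h (x - y))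

def reflect (h : ℝ → ℝ) (x : ℝ) : ℝ :=
  -h (-x)

theorem StrictMono.reflect {h : ℝ → ℝ} (hm : StrictMono h) : StrictMono (reflect h) :=
  fun _ _ hxy => neg_lt_neg (hm (neg_lt_neg hxy))

theorem reflect_comp (h₁ h₂ : ℝ → ℝ) : reflect (h₂ ∘ h₁) = reflect h₂ ∘ reflect h₁ := by
  funext x
  simp [reflect]

theorem quasiSymUpper_reflect_iff {h : ℝ → ℝ} {k : ℝ} :
    QuasiSymUpper (reflect h) k ↔ ∀ x y : ℝ, 0 < y → h x - h (x - y) ≤ k * (h (x + y) - h x) := by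
  refine ⟨fun H x y hy => ?_, fun H x y hy => ?_⟩ <;>
    convert H (-x) y hy using 1 <;> simp only [reflect] <;> ring_nf

theorem one_div_le_div_and_div_le_iff {N D k : ℝ} (hN : 0 < N) (hD : 0 < D) :
    (1 / k ≤ N / D ∧ N / D ≤ k) ↔ (N ≤ k * D ∧ D ≤ k * N) := by
  constructor
  · rintro ⟨hlower, hupper⟩
    have hk : 0 < k := (div_pos hN hD).trans_le hupper
    rw [div_le_iff₀ hD] at hupper
    rw [div_le_div_iff₀ hk hD] at hlower
    constructor <;> linarith
  · rintro ⟨hupper, hlower⟩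
    have hk : 0 < k := by nlinarith
    rw [div_le_iff₀ hD, div_le_div_iff₀ hk hD]
    constructor <;> linarith

theorem quasiSym_iff {h : ℝ → ℝ} {k : ℝ} (hm : StrictMono h) :
    QuasiSym h k ↔ QuasiSymUpper h k ∧ QuasiSymUpper (reflect h) k := by
  rw [quasiSymUpper_reflect_iff]
  simp only [QuasiSym, QuasiSymUpper, ← forall_and]
  refine forall₃_congr fun x y hy => ?_
  exact one_div_le_div_and_div_le_iff (sub_pos.2 (hm (by linarith))) (sub_pos.2 (hm (by linarith)))

theorem QuasiSym.one_le_s11 {h : ℝ → ℝ} {k : ℝ} (hqs : QuasiSym h k) (hm : StrictMono h) : 1 ≤ k := by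
  obtain ⟨hlower, hupper⟩ := hqs 0 1 one_pos
  have hk : 0 < k :=
    (div_pos (sub_pos.2 (hm (by norm_num))) (sub_pos.2 (hm (by norm_num)))).trans_le hupper
  have hkk := hlower.trans hupper
  rw [div_le_iff₀ hk] at hkk
  nlinarith

namespace QuasiSymUpper

variable {h : ℝ → ℝ} {k : ℝ}

theorem pos (hq : QuasiSymUpper h k) (hm : StrictMono h) : 0 < k := by
  have hN : 0 < h (0 + 1) - h 0 := sub_pos.2 (hm (by norm_num))
  have hD : 0 < h 0 - h (0 - 1) := sub_pos.2 (hm (by norm_num))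
  have := hq 0 1 one_pos
  nlinarith

theorem sub_le_pow_mul (hq : QuasiSymUpper h k) (hm : StrictMono h) (b : ℝ) {s : ℝ} (hs : 0 < s)
    (i : ℕ) : h (b + (i + 1) * s) - h (b + i * s) ≤ k ^ (i + 1) * (h b - h (b - s)) := by
  induction i with
  | zero => simpa using hq b s hs
  | succ i ih =>
    have hstep := hq (b + (i + 1) * s) s hs
    rw [show b + (i + 1) * s + s = b + (i + 1 + 1) * s by ring,
      show b + (i + 1) * s - s = b + i * s by ring] at hstep
    push_cast
    calc h (b + (i + 1 + 1) * s) - h (b + (i + 1) * s)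
        ≤ k * (k ^ (i + 1) * (h b - h (b - s))) :=
          hstep.trans (mul_le_mul_of_nonneg_left ih (hq.pos hm).le)
      _ = k ^ (i + 1 + 1) * (h b - h (b - s)) := by ring

theorem sub_le_geom_sum_mul (hq : QuasiSymUpper h k) (hm : StrictMono h) (b : ℝ) {s : ℝ}
    (hs : 0 < s) (n : ℕ) :
    h (b + n * s) - h b ≤ (∑ i ∈ Finset.range n, k ^ (i + 1)) * (h b - h (b - s)) := by
  calc h (b + n * s) - h b = ∑ i ∈ Finset.range n, (h (b + (i + 1) * s) - h (b + i * s)) := by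
        have := Finset.sum_range_sub (fun i : ℕ => h (b + i * s)) n
        push_cast at this
        simpa using this.symm
    _ ≤ ∑ i ∈ Finset.range n, k ^ (i + 1) * (h b - h (b - s)) :=
        Finset.sum_le_sum fun i _ => hq.sub_le_pow_mul hm b hs i
    _ = (∑ i ∈ Finset.range n, k ^ (i + 1)) * (h b - h (b - s)) := (Finset.sum_mul ..).symm

theorem comp {h₁ h₂ : ℝ → ℝ} {k₁ k₂ : ℝ} (hq₁ : QuasiSymUpper h₁ k₁) (hm₁ : StrictMono h₁)
    (hq₂ : QuasiSymUpper h₂ k₂) (hm₂ : StrictMono h₂) :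
    QuasiSymUpper (h₂ ∘ h₁) (∑ i ∈ Finset.range ⌈k₁⌉₊, k₂ ^ (i + 1)) := by
  intro x y hy
  have hab : h₁ (x - y) < h₁ x := hm₁ (by linarith)
  have hc : h₁ (x + y) ≤ h₁ x + ⌈k₁⌉₊ * (h₁ x - h₁ (x - y)) := by
    have := hq₁ x y hy
    have := Nat.le_ceil k₁
    nlinarith
  calc h₂ (h₁ (x + y)) - h₂ (h₁ x) ≤ h₂ (h₁ x + ⌈k₁⌉₊ * (h₁ x - h₁ (x - y))) - h₂ (h₁ x) :=
        sub_le_sub_right (hm₂.monotone hc) _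
    _ ≤ _ := hq₂.sub_le_geom_sum_mul hm₂ _ (sub_pos.2 hab) _
    _ = _ := by rw [sub_sub_cancel]; rfl

end QuasiSymUpper

theorem quasisymmetric_comp_general
    (h₁ h₂ : ℝ → ℝ)
    (hmono₁ : StrictMono h₁)
    (hmono₂ : StrictMono h₂)
    (k₁ k₂ : ℝ)
    (hqs₁ : QuasiSym h₁ k₁) (hqs₂ : QuasiSym h₂ k₂) :
    ∃ k : ℝ, 1 ≤ k ∧ QuasiSym (h₂ ∘ h₁) k := by
  rw [quasiSym_iff hmono₁] at hqs₁
  rw [quasiSym_iff hmono₂] at hqs₂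
  have hmono := hmono₂.comp hmono₁
  have hqs : QuasiSym (h₂ ∘ h₁) (∑ i ∈ Finset.range ⌈k₁⌉₊, k₂ ^ (i + 1)) :=
    (quasiSym_iff hmono).2 ⟨hqs₁.1.comp hmono₁ hqs₂.1 hmono₂,
      reflect_comp h₁ h₂ ▸ hqs₁.2.comp hmono₁.reflect hqs₂.2 hmono₂.reflect⟩
  exact ⟨_, hqs.one_le_s11 hmono, hqs⟩

/-- Quasisymmetric increasing homeomorphisms of ℝ are closed under composition. -/
theorem quasisymmetric_comp
    (h₁ h₂ : ℝ → ℝ)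
    (hmono₁ : StrictMono h₁) (hsurj₁ : Function.Surjective h₁)
    (hmono₂ : StrictMono h₂) (hsurj₂ : Function.Surjective h₂)
    (k₁ k₂ : ℝ) (hk₁ : 1 ≤ k₁) (hk₂ : 1 ≤ k₂)
    (hqs₁ : QuasiSym h₁ k₁) (hqs₂ : QuasiSym h₂ k₂) :
    ∃ k : ℝ, 1 ≤ k ∧ QuasiSym (h₂ ∘ h₁) k :=
  quasisymmetric_comp_general h₁ h₂ hmono₁ hmono₂ k₁ k₂ hqs₁ hqs₂
end
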